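/- arXiv:0803.2796 — 2 statements merged into one kernel-verified Lean document; each statement's English description precedes it below -/
import Mathlib

section
/- (Andréief identity, discrete form.) Let φ_0, ..., φ_k : ℤ → ℝ and f : ℤ → ℝ be functions with suitable summability (e.g. finitely supported f). Then Σ_{y ∈ ℤ^{k+1}} det(φ_j(y_i))_{0≤i,j≤k} · det(φ_l(y_i))_{0≤i,l≤k} · Π_{i=0}^{k} f(y_i) = (k+1)! · det( Σ_{x ∈ ℤ} φ_j(x) φ_l(x) f(x) )_{0≤j,l≤k}. -/
/-!
Expand the second determinant over permutations `σ`. For fixed `σ`, the weights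
`ψ (σ i) (y i) * f (y i)` scale the rows of the first determinant, so by multilinearity the sum
over `y` collapses to `det` of the transpose of `M = (∑ₓ φ_j(x) ψ_l(x) f(x))_{j,l}` with rows
permuted by `σ`, which is `sign σ * det M`. Since `sign σ ^ 2 = 1`, each of the `(k+1)!`
permutations contributes `det M`.
-/

open Finset Matrix Equiv

namespace Matrix

variable {n α R : Type*} [Fintype n] [DecidableEq n] [CommRing R]

theorem sum_piFinset_det_mul_prod (s : Finset α) (φ : n → α → R) (g : n → α → R) :
    ∑ y ∈ Fintype.piFinset fun _ : n => s, (of fun i j => φ j (y i)).det * ∏ i, g i (y i) =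
      (of fun i j => ∑ x ∈ s, g i x * φ j x).det := by
  have hrows :
      (of fun i j => ∑ x ∈ s, g i x * φ j x) = fun i => ∑ x ∈ s, g i x • fun j => φ j x := by
    ext i j
    simp only [of_apply, Finset.sum_apply, Pi.smul_apply, smul_eq_mul]
  change _ = detRowAlternating.toMultilinearMap _
  rw [hrows, MultilinearMap.map_sum_finset]
  refine sum_congr rfl fun y _ => ?_
  rw [mul_comm, ← det_mul_column]
  rfl

theorem det_of_apply_eq_sum_perm (ψ : n → α → R) (y : n → α) :
    (of fun i l => ψ l (y i)).det = ∑ σ : Perm n, Perm.sign σ * ∏ i, ψ (σ i) (y i) := by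
  rw [← det_transpose, det_apply']
  rfl

theorem sum_piFinset_det_mul_det_mul_prod (s : Finset α) (φ ψ : n → α → R) (f : α → R) :
    ∑ y ∈ Fintype.piFinset fun _ : n => s,
      (of fun i j => φ j (y i)).det * (of fun i l => ψ l (y i)).det * ∏ i, f (y i) =
      (Fintype.card n).factorial * (of fun j l => ∑ x ∈ s, φ j x * ψ l x * f x).det := by
  set M : Matrix n n R := of fun j l => ∑ x ∈ s, φ j x * ψ l x * f x
  calc _ = ∑ σ : Perm n, Perm.sign σ * ∑ y ∈ Fintype.piFinset fun _ : n => s,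
          (of fun i j => φ j (y i)).det * ∏ i, (ψ (σ i) (y i) * f (y i)) := by
        simp only [det_of_apply_eq_sum_perm ψ, mul_sum, sum_mul, prod_mul_distrib]
        rw [sum_comm]
        refine sum_congr rfl fun σ _ => sum_congr rfl fun y _ => by ring
    _ = ∑ σ : Perm n, Perm.sign σ * (Mᵀ.submatrix σ id).det := by
        refine sum_congr rfl fun σ _ => ?_
        rw [sum_piFinset_det_mul_prod s φ fun i x => ψ (σ i) x * f x]
        congr 2
        ext i j
        simp only [of_apply, submatrix_apply, transpose_apply, id, M]
        exact sum_congr rfl fun x _ => by ring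
    _ = ∑ _σ : Perm n, M.det := by
        refine sum_congr rfl fun σ _ => ?_
        rw [det_permute, det_transpose, ← mul_assoc, ← Int.cast_mul, Int.units_coe_mul_self,
          Int.cast_one, one_mul]
    _ = _ := by simp [Fintype.card_perm]

end Matrix

/-- Andréief's identity in discrete form: for functions `φ_0, …, φ_k : ℤ → ℝ` and a
finitely supported weight `f : ℤ → ℝ`,
`Σ_y det(φ_j(y_i)) · det(φ_l(y_i)) · Π_i f(y_i) = (k+1)! · det(Σ_x φ_j(x) φ_l(x) f(x))`. -/
theorem andreief_identity (k : ℕ) (φ : Fin (k + 1) → ℤ → ℝ) (f : ℤ → ℝ)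
    (hf : (Function.support f).Finite) :
    ∑' y : Fin (k + 1) → ℤ,
      (Matrix.det (Matrix.of fun i j : Fin (k + 1) => φ j (y i)) *
        Matrix.det (Matrix.of fun i l : Fin (k + 1) => φ l (y i)) *
        ∏ i : Fin (k + 1), f (y i)) =
    (Nat.factorial (k + 1) : ℝ) *
      Matrix.det (Matrix.of fun j l : Fin (k + 1) => ∑' x : ℤ, φ j x * φ l x * f x) := by
  have hfs : ∀ x ∉ hf.toFinset, f x = 0 := fun x hx => by simpa using hx
  have hrhs : ∀ j l, ∑' x : ℤ, φ j x * φ l x * f x = ∑ x ∈ hf.toFinset, φ j x * φ l x * f x :=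
    fun j l => tsum_eq_sum fun x hx => by rw [hfs x hx, mul_zero]
  rw [tsum_eq_sum (s := Fintype.piFinset fun _ => hf.toFinset),
    Matrix.sum_piFinset_det_mul_det_mul_prod]
  · simp only [hrhs, Fintype.card_fin]
  · intro y hy
    obtain ⟨i, hi⟩ : ∃ i, y i ∉ hf.toFinset := by simpa [Fintype.mem_piFinset] using hy
    rw [prod_eq_zero (mem_univ i) (hfs _ hi), mul_zero]
end

section
/- (Characteristics of a scalar conservation law are straight lines.) Let J : ℝ → ℝ be C², let c(ρ) = J'(ρ), and suppose ρ(x,t) is a C¹ solution of ∂ρ/∂t + c(ρ)·∂ρ/∂x = 0 on ℝ × [0,T). Then for any point x_0 and ρ_0 = ρ(x_0, 0), the function t ↦ ρ(x_0 + c(ρ_0)·t, t) is constant equal to ρ_0, as long as the straight line stays in the domain of the solution. -/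
open Set

/-!
Along the line `γ(τ) = (x₀ + c₀ τ, τ)` with `c₀ = c(ρ(x₀, 0))`, the chain rule and the equation give
`d/dτ ρ(γ τ) = ρ_t + c₀ ρ_x = (c₀ - c(ρ(γ τ))) · ρ_x(γ τ)`. So `g = ρ ∘ γ` solves the scalar ODE
`g' = (c₀ - c(g)) · u(τ)` with `u = ρ_x ∘ γ` continuous and `y ↦ c₀ - c(y)` locally Lipschitz
(as `c = J'` is `C¹`). The constant `ρ(x₀, 0)` is a zero of the right-hand side, hence a solution
with the same initial value, and uniqueness for Lipschitz ODEs gives `g ≡ ρ(x₀, 0)`.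
-/

theorem LipschitzOnWith.mul_const_of_abs_le {α : Type*} [PseudoMetricSpace α] {s : Set α}
    {F : α → ℝ} {L : NNReal}
    (hF : LipschitzOnWith L F s) {m : ℝ} {U : NNReal} (hm : |m| ≤ U) :
    LipschitzOnWith (L * U) (fun y => F y * m) s := by
  refine LipschitzOnWith.of_dist_le_mul fun y hy z hz => ?_
  rw [Real.dist_eq, ← sub_mul, abs_mul, NNReal.coe_mul, mul_right_comm]
  exact mul_le_mul (hF.dist_le_mul y hy z hz) hm (abs_nonneg _) (by positivity)

theorem eqOn_of_hasDerivWithinAt_mul_of_apply_eq_zero {F u f : ℝ → ℝ} {a b : ℝ}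
    (hF : LocallyLipschitz F) (hFa : F (f a) = 0) (hu : ContinuousOn u (Icc a b))
    (hf : ContinuousOn f (Icc a b))
    (hf' : ∀ τ ∈ Ico a b, HasDerivWithinAt f (F (f τ) * u τ) (Ici τ) τ) :
    EqOn f (fun _ => f a) (Icc a b) := by
  have hK : IsCompact (f '' Icc a b) := isCompact_Icc.image_of_continuousOn hf
  obtain ⟨L, hL⟩ := hF.locallyLipschitzOn.exists_lipschitzOnWith_of_compact hK
  obtain ⟨U, hU⟩ := isCompact_Icc.exists_bound_of_continuousOn hu
  refine ODE_solution_unique_of_mem_Icc_right (v := fun τ y => F y * u τ)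
    (s := fun _ => f '' Icc a b) (K := L * U.toNNReal)
    (fun τ hτ => hL.mul_const_of_abs_le
      ((hU τ (Ico_subset_Icc_self hτ)).trans (Real.le_coe_toNNReal U)))
    hf hf' (fun τ hτ => mem_image_of_mem f (Ico_subset_Icc_self hτ)) continuousOn_const
    (fun τ _ => by simpa [hFa] using hasDerivWithinAt_const τ (Ici τ) (f a))
    (fun τ hτ => mem_image_of_mem f (left_mem_Icc.2 (hτ.1.trans hτ.2.le))) rfl

theorem HasFDerivWithinAt.hasDerivWithinAt_comp_line {E : Type*} [NormedAddCommGroup E]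
    [NormedSpace ℝ E] {ρ : ℝ × ℝ → E} {ρ' : ℝ × ℝ →L[ℝ] E} {S : Set (ℝ × ℝ)} {s : Set ℝ}
    {x₀ a τ : ℝ} (hρ : HasFDerivWithinAt ρ ρ' S (x₀ + a * τ, τ))
    (hs : MapsTo (fun σ => (x₀ + a * σ, σ)) s S) :
    HasDerivWithinAt (fun σ => ρ (x₀ + a * σ, σ)) (ρ' (0, 1) + a • ρ' (1, 0)) s τ := by
  have hline : HasDerivWithinAt (fun σ => (x₀ + a * σ, σ)) (a, 1) s τ := by
    simpa using ((((hasDerivAt_id τ).const_mul a).const_add x₀).prodMk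
      (hasDerivAt_id τ)).hasDerivWithinAt (s := s)
  have hdir : ((a, 1) : ℝ × ℝ) = a • ((1 : ℝ), (0 : ℝ)) + ((0 : ℝ), (1 : ℝ)) := by simp
  refine (hρ.comp_hasDerivWithinAt_of_eq τ hline hs rfl).congr_deriv ?_
  rw [hdir, map_add, map_smul, add_comm]

theorem characteristics_constant_general (T : ℝ)
    (J : ℝ → ℝ) (hJ : ContDiff ℝ 2 J)
    (ρ : ℝ × ℝ → ℝ)
    (hρ : ContDiffOn ℝ 1 ρ (univ ×ˢ Ico 0 T))
    (hpde : ∀ p ∈ univ ×ˢ Ico (0 : ℝ) T,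
      fderivWithin ℝ ρ (univ ×ˢ Ico 0 T) p ((0 : ℝ), (1 : ℝ)) +
        deriv J (ρ p) * fderivWithin ℝ ρ (univ ×ˢ Ico 0 T) p ((1 : ℝ), (0 : ℝ)) = 0)
    (x₀ : ℝ) :
    ∀ t ∈ Ico (0 : ℝ) T, ρ (x₀ + deriv J (ρ (x₀, 0)) * t, t) = ρ (x₀, 0) := by
  intro t ht
  set S : Set (ℝ × ℝ) := univ ×ˢ Ico 0 T
  set c₀ := deriv J (ρ (x₀, 0))
  have hline : MapsTo (fun τ => (x₀ + c₀ * τ, τ)) (Ico 0 T) S := fun τ hτ => ⟨trivial, hτ⟩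
  have hline_t : MapsTo (fun τ => (x₀ + c₀ * τ, τ)) (Icc 0 t) S :=
    hline.mono_left (Icc_subset_Ico_right ht.2)
  have hρx : ContinuousOn (fun τ => fderivWithin ℝ ρ S (x₀ + c₀ * τ, τ) (1, 0)) (Icc 0 t) :=
    ((hρ.continuousOn_fderivWithin (uniqueDiffOn_univ.prod (uniqueDiffOn_Ico 0 T)) le_rfl).clm_apply
      continuousOn_const).comp (by fun_prop) hline_t
  have hchar : ∀ τ ∈ Ico 0 t, HasDerivWithinAt (fun τ => ρ (x₀ + c₀ * τ, τ))
      ((c₀ - deriv J (ρ (x₀ + c₀ * τ, τ))) * fderivWithin ℝ ρ S (x₀ + c₀ * τ, τ) (1, 0))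
      (Ici τ) τ := by
    intro τ hτ
    have hτT : τ ∈ Ico 0 T := ⟨hτ.1, hτ.2.trans ht.2⟩
    have hnhds : Ico 0 T ∈ nhdsWithin τ (Ici τ) :=
      Filter.mem_of_superset (Ico_mem_nhdsGE hτT.2) (Ico_subset_Ico_left hτT.1)
    refine ((((hρ.differentiableOn one_ne_zero) _ (hline hτT)).hasFDerivWithinAt
      |>.hasDerivWithinAt_comp_line hline).mono_of_mem_nhdsWithin hnhds).congr_deriv ?_
    rw [smul_eq_mul]
    linear_combination hpde _ (hline hτT)
  have hF : LocallyLipschitz (fun y => c₀ - deriv J y) :=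
    (contDiff_const.sub (hJ.deriv' (n := 1))).locallyLipschitz
  have hconst := eqOn_of_hasDerivWithinAt_mul_of_apply_eq_zero hF (by simp [c₀])
    hρx (hρ.continuousOn.comp (by fun_prop) hline_t) hchar ⟨ht.1, le_rfl⟩
  simpa using hconst

/-- Characteristics of a scalar conservation law are straight lines: a C¹ solution of
`∂ρ/∂t + c(ρ)·∂ρ/∂x = 0` on `ℝ × [0,T)` is constant along the straight line
`x = x₀ + c(ρ(x₀,0))·t`. Here the first coordinate is `x`, the second is `t`. -/
theorem characteristics_constant (T : ℝ) (hT : 0 < T)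
    (J : ℝ → ℝ) (hJ : ContDiff ℝ 2 J)
    (ρ : ℝ × ℝ → ℝ)
    (hρ : ContDiffOn ℝ 1 ρ (univ ×ˢ Ico 0 T))
    (hpde : ∀ p ∈ univ ×ˢ Ico (0 : ℝ) T,
      fderivWithin ℝ ρ (univ ×ˢ Ico 0 T) p ((0 : ℝ), (1 : ℝ)) +
        deriv J (ρ p) * fderivWithin ℝ ρ (univ ×ˢ Ico 0 T) p ((1 : ℝ), (0 : ℝ)) = 0)
    (x₀ : ℝ) :
    ∀ t ∈ Ico (0 : ℝ) T, ρ (x₀ + deriv J (ρ (x₀, 0)) * t, t) = ρ (x₀, 0) :=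
  characteristics_constant_general T J hJ ρ hρ hpde x₀
end
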